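/- arXiv:2304.06995 — 6 statements merged into one kernel-verified Lean document; each statement's English description precedes it below -/
import Mathlib

section
/- With the notation of the context, for every ε ∈ (0,1) and every s ∈ (0,1] one has γ₀^{2(2b)^{m+2}} · r₀^{m−a} · η₀^{m} ≥ (s^{m−a} / 2^{(τ+1)(m−a)}) · ε^{E}, where E = 9/16 + (1+3m)/(2Ξ) + (m−a)/(4(2b)^{m+2}Ξ). -/
/-- the initial smallness estimate (Lemma 2.1) of the KAM scheme:
`γ₀^{2(2b)^{m+2}} · r₀^{m−a} · η₀^{m} ≥ (s^{m−a} / 2^{(τ+1)(m−a)}) · ε^{E}` with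
`E = 9/16 + (1+3m)/(2Ξ) + (m−a)/(4(2b)^{m+2}Ξ)`. -/
theorem stmt_0
    (n b L m μ τ : ℕ)
    (hn : 1 ≤ n) (hb : 1 ≤ b) (hL : 2 ≤ L) (hμpos : 1 ≤ μ) (hτpos : 1 ≤ τ) (hmpos : 1 ≤ m)
    (hm : (L : ℝ) + Real.sqrt (4 * (L : ℝ) ^ 2 + 2 * (L : ℝ)) / 2 ≤ (m : ℝ))
    (hτ : (n : ℝ) - 1 ≤ (τ : ℝ))
    (hμ : (2 : ℝ) ≤ (1 + 1 / (2 * (m : ℝ))) ^ μ)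
    (a : ℕ) (ha : (a : ℤ) = ⌈((m : ℝ) + 1) / 3⌉)
    (Ξ : ℝ) (hΞ : Ξ = 8 * (μ : ℝ) * ((m : ℝ) + 1) * ((m : ℝ) - (a : ℝ)) * ((τ : ℝ) + 1))
    (ε s : ℝ) (hε : ε ∈ Set.Ioo (0 : ℝ) 1) (hs : s ∈ Set.Ioc (0 : ℝ) 1)
    (γ₀ η₀ K₁ r₀ : ℝ)
    (hγ₀ : γ₀ = ε ^ (1 / (4 * (2 * (b : ℝ)) ^ (m + 2) * Ξ)))
    (hη₀ : η₀ = γ₀ ^ (2 * (2 * (b : ℝ)) ^ (m + 2)) * ε ^ (1 / Ξ))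
    (hK₁ : K₁ = ((⌊Real.log (η₀ ^ (-((m : ℝ) + 1)))⌋ + 1 : ℤ) : ℝ) ^ (3 * μ))
    (hr₀ : r₀ = s * γ₀ / (K₁ + 1) ^ ((τ : ℝ) + 1)) :
    s ^ ((m : ℝ) - (a : ℝ)) / 2 ^ (((τ : ℝ) + 1) * ((m : ℝ) - (a : ℝ))) *
        ε ^ (9 / 16 + (1 + 3 * (m : ℝ)) / (2 * Ξ) +
          ((m : ℝ) - (a : ℝ)) / (4 * (2 * (b : ℝ)) ^ (m + 2) * Ξ)) ≤
      γ₀ ^ (2 * (2 * (b : ℝ)) ^ (m + 2)) * r₀ ^ ((m : ℝ) - (a : ℝ)) * η₀ ^ (m : ℝ) := by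
  obtain ⟨hε0, hε1⟩ := hε
  obtain ⟨hs0, hs1⟩ := hs
  have hb1 : (1:ℝ) ≤ (b:ℝ) := by exact_mod_cast hb
  have hX0 : (0:ℝ) < (2*(b:ℝ))^(m+2) := by positivity
  set X : ℝ := (2*(b:ℝ))^(m+2) with hXdef
  have hXne : X ≠ 0 := ne_of_gt hX0
  have hL2 : (2:ℝ) ≤ (L:ℝ) := by exact_mod_cast hL
  have hsq : 0 < Real.sqrt (4*(L:ℝ)^2 + 2*(L:ℝ)) := Real.sqrt_pos.mpr (by nlinarith)
  have hm2 : (2:ℝ) < (m:ℝ) := by nlinarith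
  have haR : (a:ℝ) < ((m:ℝ)+1)/3 + 1 := by
    have h := Int.ceil_lt_add_one (((m:ℝ)+1)/3)
    have h2 : ((a:ℤ):ℝ) = ((⌈((m:ℝ)+1)/3⌉ : ℤ) : ℝ) := by exact_mod_cast congrArg Int.cast ha
    push_cast at h2
    rw [h2]
    exact h
  have hM : 0 < (m:ℝ) - (a:ℝ) := by linarith
  have hMne : (m:ℝ) - (a:ℝ) ≠ 0 := ne_of_gt hM
  have hμ0 : (0:ℝ) < (μ:ℝ) := by exact_mod_cast hμpos
  have hμne : (μ:ℝ) ≠ 0 := ne_of_gt hμ0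
  have hm1 : (0:ℝ) < (m:ℝ) + 1 := by linarith
  have hm1ne : (m:ℝ) + 1 ≠ 0 := ne_of_gt hm1
  have hτ1 : (0:ℝ) < (τ:ℝ) + 1 := by positivity
  have hτ1ne : (τ:ℝ) + 1 ≠ 0 := ne_of_gt hτ1
  have hΞ0 : 0 < Ξ := by
    rw [hΞ]
    exact mul_pos (mul_pos (mul_pos (by positivity) hm1) hM) hτ1
  have hΞne : Ξ ≠ 0 := ne_of_gt hΞ0
  have hγpos : 0 < γ₀ := by rw [hγ₀]; exact Real.rpow_pos_of_pos hε0 _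
  -- basic rewrites
  have hγB : γ₀ ^ (2*X) = ε ^ (1/(2*Ξ)) := by
    rw [hγ₀, ← Real.rpow_mul hε0.le]
    congr 1
    field_simp
    ring
  have hγM : γ₀ ^ ((m:ℝ)-(a:ℝ)) = ε ^ (((m:ℝ)-(a:ℝ))/(4*X*Ξ)) := by
    rw [hγ₀, ← Real.rpow_mul hε0.le]
    congr 1
    field_simp
  have hηE : η₀ = ε ^ (3/(2*Ξ)) := by
    rw [hη₀, hγB, ← Real.rpow_add hε0]
    congr 1
    field_simp
    ring
  have hηpos : 0 < η₀ := by rw [hηE]; exact Real.rpow_pos_of_pos hε0 _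
  -- the logarithm quantity
  set x : ℝ := -Real.log ε with hxdef
  have hx0 : 0 < x := by
    have := Real.log_neg hε0 hε1
    simp only [hxdef]
    linarith
  set y : ℝ := Real.log (η₀ ^ (-((m : ℝ) + 1))) with hydef
  have hyval : y = ((m:ℝ)+1) * (3/(2*Ξ)) * x := by
    rw [hydef, Real.log_rpow hηpos, hηE, Real.log_rpow hε0, hxdef]
    ring
  have hy0 : 0 ≤ y := by
    rw [hyval]
    positivity
  have hf0 : (0:ℤ) ≤ ⌊y⌋ := Int.floor_nonneg.mpr hy0
  have hf1 : (1:ℝ) ≤ ((⌊y⌋ + 1 : ℤ):ℝ) := by exact_mod_cast by omega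
  have hfle : ((⌊y⌋ + 1 : ℤ):ℝ) ≤ y + 1 := by push_cast; linarith [Int.floor_le y]
  have hy1 : (1:ℝ) ≤ y + 1 := by linarith
  have hK1le : K₁ ≤ (y+1)^(3*μ) := by
    rw [hK₁]; exact pow_le_pow_left₀ (by linarith) hfle _
  have hy1pow : (1:ℝ) ≤ (y+1)^(3*μ) := by
    calc (1:ℝ) = 1^(3*μ) := (one_pow _).symm
    _ ≤ (y+1)^(3*μ) := pow_le_pow_left₀ zero_le_one hy1 _
  have hK1ge : (1:ℝ) ≤ K₁ := by
    rw [hK₁]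
    calc (1:ℝ) = 1^(3*μ) := (one_pow _).symm
    _ ≤ ((⌊y⌋ + 1 : ℤ):ℝ)^(3*μ) := pow_le_pow_left₀ zero_le_one hf1 _
  have hK1pos : 0 < K₁ + 1 := by linarith
  set P : ℝ := ((τ:ℝ)+1) * ((m:ℝ)-(a:ℝ)) with hPdef
  have hP0 : 0 < P := mul_pos hτ1 hM
  -- key bound : (K₁+1)^P ≤ 2^P * ε^(-(9/16))
  have key : (K₁+1) ^ P ≤ 2 ^ P * ε ^ (-(9/16) : ℝ) := by
    have h1 : K₁ + 1 ≤ 2 * (y+1)^(3*μ) := by linarith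
    have h2 : (K₁+1)^P ≤ (2 * (y+1)^(3*μ))^P :=
      Real.rpow_le_rpow hK1pos.le h1 hP0.le
    have h3 : (2 * (y+1)^(3*μ))^P = 2^P * ((y+1)^(3*μ))^P :=
      Real.mul_rpow (by norm_num) (by positivity)
    have h4 : ((y+1)^(3*μ))^P ≤ ((Real.exp y)^(3*μ))^P := by
      apply Real.rpow_le_rpow (by positivity) _ hP0.le
      exact pow_le_pow_left₀ (by linarith) (by linarith [Real.add_one_le_exp y]) _
    have h5 : ((Real.exp y)^(3*μ))^P = Real.exp (((3*μ:ℕ):ℝ) * y * P) := by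
      rw [← Real.exp_nat_mul, Real.rpow_def_of_pos (Real.exp_pos _), Real.log_exp]
    have h6 : ((3*μ:ℕ):ℝ) * y * P = (9/16) * x := by
      push_cast
      rw [hyval, hPdef, hΞ]
      field_simp
      ring
    have h7 : Real.exp ((9/16) * x) = ε ^ (-(9/16) : ℝ) := by
      rw [Real.rpow_def_of_pos hε0, hxdef]
      ring_nf
    calc (K₁+1)^P ≤ (2 * (y+1)^(3*μ))^P := h2
      _ = 2^P * ((y+1)^(3*μ))^P := h3
      _ ≤ 2^P * ((Real.exp y)^(3*μ))^P :=
          mul_le_mul_of_nonneg_left h4 (le_of_lt (Real.rpow_pos_of_pos two_pos P))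
      _ = 2^P * ε ^ (-(9/16) : ℝ) := by rw [h5, h6, h7]
  have hKppos : 0 < (K₁+1) ^ P := Real.rpow_pos_of_pos hK1pos P
  have h2Ppos : (0:ℝ) < (2:ℝ) ^ P := Real.rpow_pos_of_pos two_pos P
  have hstep : ε ^ ((9:ℝ)/16) * (K₁+1)^P ≤ 2^P := by
    have h := mul_le_mul_of_nonneg_left key (Real.rpow_nonneg hε0.le ((9:ℝ)/16))
    have heq : ε ^ ((9:ℝ)/16) * ((2:ℝ)^P * ε ^ (-(9/16):ℝ)) = 2^P := by
      rw [show ε ^ ((9:ℝ)/16) * ((2:ℝ)^P * ε ^ (-(9/16):ℝ))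
            = (ε ^ ((9:ℝ)/16) * ε ^ (-(9/16):ℝ)) * 2^P from by ring,
          ← Real.rpow_add hε0]
      norm_num
    rw [heq] at h
    exact h
  have keyfinal : ε ^ ((9:ℝ)/16) / (2:ℝ)^P ≤ 1 / ((K₁+1)^P) := by
    rw [div_le_div_iff₀ h2Ppos hKppos]
    calc ε ^ ((9:ℝ)/16) * (K₁+1)^P ≤ 2^P := hstep
      _ = 1 * 2^P := (one_mul _).symm
  -- assemble
  have hηm : η₀ ^ ((m:ℝ)) = ε ^ (3/(2*Ξ)*(m:ℝ)) := by
    rw [hηE, ← Real.rpow_mul hε0.le]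
  have hQ : ((K₁+1) ^ ((τ:ℝ)+1)) ^ ((m:ℝ)-(a:ℝ)) = (K₁+1)^P := by
    rw [← Real.rpow_mul hK1pos.le, hPdef]
  have hrM : r₀ ^ ((m:ℝ)-(a:ℝ))
      = s ^ ((m:ℝ)-(a:ℝ)) * ε ^ (((m:ℝ)-(a:ℝ))/(4*X*Ξ)) / (K₁+1)^P := by
    rw [hr₀, Real.div_rpow (mul_nonneg hs0.le hγpos.le) (Real.rpow_nonneg hK1pos.le _),
        Real.mul_rpow hs0.le hγpos.le, hγM, hQ]
  have hE : (9:ℝ)/16 + (1+3*(m:ℝ))/(2*Ξ) + ((m:ℝ)-(a:ℝ))/(4*X*Ξ)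
      = (9:ℝ)/16 + (1/(2*Ξ) + ((3/(2*Ξ)*(m:ℝ)) + ((m:ℝ)-(a:ℝ))/(4*X*Ξ))) := by
    ring
  have hEe : ε ^ ((9:ℝ)/16 + (1+3*(m:ℝ))/(2*Ξ) + ((m:ℝ)-(a:ℝ))/(4*X*Ξ))
      = ε ^ ((9:ℝ)/16) * (ε ^ (1/(2*Ξ)) * (ε ^ (3/(2*Ξ)*(m:ℝ)) * ε ^ (((m:ℝ)-(a:ℝ))/(4*X*Ξ)))) := by
    rw [hE, Real.rpow_add hε0, Real.rpow_add hε0, Real.rpow_add hε0]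
  rw [hγB, hrM, hηm, hEe]
  have hA0 : 0 ≤ s ^ ((m:ℝ)-(a:ℝ)) * ε ^ (1/(2*Ξ)) * ε ^ (3/(2*Ξ)*(m:ℝ))
      * ε ^ (((m:ℝ)-(a:ℝ))/(4*X*Ξ)) := by
    have := Real.rpow_nonneg hs0.le ((m:ℝ)-(a:ℝ))
    have := Real.rpow_nonneg hε0.le (1/(2*Ξ))
    have := Real.rpow_nonneg hε0.le (3/(2*Ξ)*(m:ℝ))
    have := Real.rpow_nonneg hε0.le (((m:ℝ)-(a:ℝ))/(4*X*Ξ))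
    positivity
  calc s ^ ((m:ℝ)-(a:ℝ)) / 2^P *
        (ε ^ ((9:ℝ)/16) * (ε ^ (1/(2*Ξ)) * (ε ^ (3/(2*Ξ)*(m:ℝ)) * ε ^ (((m:ℝ)-(a:ℝ))/(4*X*Ξ)))))
      = (s ^ ((m:ℝ)-(a:ℝ)) * ε ^ (1/(2*Ξ)) * ε ^ (3/(2*Ξ)*(m:ℝ)) * ε ^ (((m:ℝ)-(a:ℝ))/(4*X*Ξ)))
        * (ε ^ ((9:ℝ)/16) / 2^P) := by ring
    _ ≤ (s ^ ((m:ℝ)-(a:ℝ)) * ε ^ (1/(2*Ξ)) * ε ^ (3/(2*Ξ)*(m:ℝ)) * ε ^ (((m:ℝ)-(a:ℝ))/(4*X*Ξ)))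
        * (1 / ((K₁+1)^P)) := mul_le_mul_of_nonneg_left keyfinal hA0
    _ = ε ^ (1/(2*Ξ)) *
        (s ^ ((m:ℝ)-(a:ℝ)) * ε ^ (((m:ℝ)-(a:ℝ))/(4*X*Ξ)) / (K₁+1)^P) * ε ^ (3/(2*Ξ)*(m:ℝ)) := by
      ring
end

section
/- With the notation of the context, let ε ∈ (0,1), s ∈ (0,1], and let N ≥ 0 be a real number satisfying ε^{7/16} · N ≤ (s^{m−a} / 2^{(τ+1)(m−a)}) · ε^{(1+3m)/(2Ξ) + (m−a)/(4(2b)^{m+2}Ξ)}. Then ε · N ≤ γ₀^{2(2b)^{m+2}} · r₀^{m−a} · η₀^{m}. -/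
set_option maxHeartbeats 1600000 in
/-- if `ε^{7/16} · N ≤ (s^{m−a}/2^{(τ+1)(m−a)}) · ε^{(1+3m)/(2Ξ)+(m−a)/(4(2b)^{m+2}Ξ)}`,
then `ε · N ≤ γ₀^{2(2b)^{m+2}} · r₀^{m−a} · η₀^{m}` (the bound on `‖X_{εP}‖` of Lemma 2.1). -/
theorem stmt_1
    (n b L m μ τ : ℕ)
    (hn : 1 ≤ n) (hb : 1 ≤ b) (hL : 2 ≤ L) (hμpos : 1 ≤ μ) (hτpos : 1 ≤ τ) (hmpos : 1 ≤ m)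
    (hm : (L : ℝ) + Real.sqrt (4 * (L : ℝ) ^ 2 + 2 * (L : ℝ)) / 2 ≤ (m : ℝ))
    (hτ : (n : ℝ) - 1 ≤ (τ : ℝ))
    (hμ : (2 : ℝ) ≤ (1 + 1 / (2 * (m : ℝ))) ^ μ)
    (a : ℕ) (ha : (a : ℤ) = ⌈((m : ℝ) + 1) / 3⌉)
    (Ξ : ℝ) (hΞ : Ξ = 8 * (μ : ℝ) * ((m : ℝ) + 1) * ((m : ℝ) - (a : ℝ)) * ((τ : ℝ) + 1))
    (ε s : ℝ) (hε : ε ∈ Set.Ioo (0 : ℝ) 1) (hs : s ∈ Set.Ioc (0 : ℝ) 1)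
    (γ₀ η₀ K₁ r₀ : ℝ)
    (hγ₀ : γ₀ = ε ^ (1 / (4 * (2 * (b : ℝ)) ^ (m + 2) * Ξ)))
    (hη₀ : η₀ = γ₀ ^ (2 * (2 * (b : ℝ)) ^ (m + 2)) * ε ^ (1 / Ξ))
    (hK₁ : K₁ = ((⌊Real.log (η₀ ^ (-((m : ℝ) + 1)))⌋ + 1 : ℤ) : ℝ) ^ (3 * μ))
    (hr₀ : r₀ = s * γ₀ / (K₁ + 1) ^ ((τ : ℝ) + 1))
    (N : ℝ) (hN : 0 ≤ N)
    (hNsmall : ε ^ ((7 : ℝ) / 16) * N ≤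
      s ^ ((m : ℝ) - (a : ℝ)) / 2 ^ (((τ : ℝ) + 1) * ((m : ℝ) - (a : ℝ))) *
        ε ^ ((1 + 3 * (m : ℝ)) / (2 * Ξ) +
          ((m : ℝ) - (a : ℝ)) / (4 * (2 * (b : ℝ)) ^ (m + 2) * Ξ))) :
    ε * N ≤ γ₀ ^ (2 * (2 * (b : ℝ)) ^ (m + 2)) * r₀ ^ ((m : ℝ) - (a : ℝ)) * η₀ ^ (m : ℝ) := by
  obtain ⟨hε0, hε1⟩ := hε
  obtain ⟨hs0, hs1⟩ := hs
  have hbR : (1:ℝ) ≤ (b:ℝ) := by exact_mod_cast hb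
  set B : ℝ := (2 * (b : ℝ)) ^ (m + 2) with hBdef
  have hB : 0 < B := by positivity
  have hL2 : (2:ℝ) ≤ (L:ℝ) := by exact_mod_cast hL
  have hsq : (2:ℝ) < Real.sqrt (4 * (L:ℝ) ^ 2 + 2 * (L:ℝ)) := by
    have h4 : (2:ℝ) = Real.sqrt 4 := by
      rw [show (4:ℝ) = 2 ^ 2 by norm_num, Real.sqrt_sq (by norm_num)]
    rw [h4]
    apply Real.sqrt_lt_sqrt (by norm_num)
    nlinarith
  have hm3 : (3:ℝ) < (m:ℝ) := by nlinarith
  have hm4 : (4:ℝ) ≤ (m:ℝ) := by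
    have h : (3:ℕ) < m := by exact_mod_cast hm3
    have h2 : (4:ℕ) ≤ m := h
    exact_mod_cast h2
  have haR : (a:ℝ) = ((⌈((m:ℝ)+1)/3⌉ : ℤ) : ℝ) := by exact_mod_cast ha
  have haZ : 3 * (a:ℤ) ≤ (m:ℤ) + 3 := by
    have h1 : ((⌈((m:ℝ)+1)/3⌉ : ℤ) : ℝ) < ((m:ℝ)+1)/3 + 1 := Int.ceil_lt_add_one _
    have h2 : 3 * (a:ℝ) < (m:ℝ) + 4 := by rw [haR]; linarith
    have h3 : 3 * (a:ℤ) < (m:ℤ) + 4 := by exact_mod_cast h2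
    omega
  have ham : (a:ℝ) + 1 ≤ (m:ℝ) := by
    have h : (3 * (a:ℤ) : ℝ) ≤ ((m:ℤ) : ℝ) + 3 := by exact_mod_cast haZ
    push_cast at h
    linarith
  have hma : 0 < (m:ℝ) - (a:ℝ) := by linarith
  have hμR : (0:ℝ) < (μ:ℝ) := by exact_mod_cast hμpos
  have hΞpos : 0 < Ξ := by
    rw [hΞ]
    exact mul_pos (mul_pos (mul_pos (by positivity) (by positivity)) hma) (by positivity)
  set x : ℝ := -Real.log ε with hxdef
  have hx : 0 < x := by
    rw [hxdef]
    exact neg_pos.mpr (Real.log_neg hε0 hε1)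
  set c : ℝ := 3 * ((m:ℝ) + 1) / (2 * Ξ) with hcdef
  have hc : 0 < c := by
    rw [hcdef]
    exact div_pos (by positivity) (by linarith)
  have hy : 0 < c * x := mul_pos hc hx
  have γpos : 0 < γ₀ := by rw [hγ₀]; exact Real.rpow_pos_of_pos hε0 _
  have hγ2B : γ₀ ^ (2 * B) = ε ^ (1 / (2 * Ξ)) := by
    rw [hγ₀, ← Real.rpow_mul hε0.le]
    congr 1
    field_simp
    ring
  have hη : η₀ = ε ^ (3 / (2 * Ξ)) := by
    rw [hη₀, hγ2B, ← Real.rpow_add hε0]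
    congr 1
    field_simp
    ring
  have hηm : η₀ ^ ((m:ℝ)) = ε ^ (3 * (m:ℝ) / (2 * Ξ)) := by
    rw [hη, ← Real.rpow_mul hε0.le]
    congr 1
    ring
  have hlog : Real.log (η₀ ^ (-((m:ℝ) + 1))) = c * x := by
    rw [hη, ← Real.rpow_mul hε0.le, Real.log_rpow hε0, hcdef, hxdef]
    ring
  rw [hlog] at hK₁
  have hfl : ((⌊c * x⌋ : ℤ) : ℝ) ≤ c * x := Int.floor_le _
  have hfl0 : (0:ℤ) ≤ ⌊c * x⌋ := Int.floor_nonneg.mpr hy.le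
  have hbase1 : (1:ℝ) ≤ ((⌊c * x⌋ + 1 : ℤ) : ℝ) := by
    have : (1:ℤ) ≤ ⌊c * x⌋ + 1 := by omega
    exact_mod_cast this
  have hbasele : ((⌊c * x⌋ + 1 : ℤ) : ℝ) ≤ c * x + 1 := by push_cast; linarith
  have hK1ge1 : (1:ℝ) ≤ K₁ := by
    rw [hK₁]
    calc (1:ℝ) = 1 ^ (3 * μ) := (one_pow _).symm
    _ ≤ ((⌊c * x⌋ + 1 : ℤ) : ℝ) ^ (3 * μ) := pow_le_pow_left₀ zero_le_one hbase1 _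
  have hK1le : K₁ ≤ (c * x + 1) ^ (3 * μ) := by
    rw [hK₁]
    exact pow_le_pow_left₀ (by linarith) hbasele _
  have hrpos : (0:ℝ) < K₁ + 1 := by linarith
  set P : ℝ := ((τ:ℝ) + 1) * ((m:ℝ) - (a:ℝ)) with hPdef
  have hP : 0 < P := mul_pos (by positivity) hma
  have honele : (1:ℝ) ≤ (c * x + 1) ^ (3 * μ) := by
    calc (1:ℝ) = 1 ^ (3 * μ) := (one_pow _).symm
    _ ≤ (c * x + 1) ^ (3 * μ) := pow_le_pow_left₀ zero_le_one (by linarith) _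
  have hca : c * ((((3 * μ : ℕ)):ℝ) * P) = 9 / 16 := by
    push_cast
    rw [hcdef, hPdef, div_mul_eq_mul_div,
        div_eq_iff (ne_of_gt (by linarith : (0:ℝ) < 2 * Ξ)), hΞ]
    ring
  have hkey : (K₁ + 1) ^ P ≤ 2 ^ P * ε ^ (-(9:ℝ)/16) := by
    have h1 : K₁ + 1 ≤ 2 * (c * x + 1) ^ (3 * μ) := by linarith
    have h2 : (K₁ + 1) ^ P ≤ (2 * (c * x + 1) ^ (3 * μ)) ^ P :=
      Real.rpow_le_rpow (by linarith) h1 hP.le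
    have h3 : (2 * (c * x + 1) ^ (3 * μ)) ^ P = 2 ^ P * ((c * x + 1) ^ (3 * μ)) ^ P :=
      Real.mul_rpow (by norm_num) (by positivity)
    have h4 : ((c * x + 1) ^ (3 * μ)) ^ P ≤ ε ^ (-(9:ℝ)/16) := by
      have hxc1 : (0:ℝ) ≤ c * x + 1 := by linarith
      rw [← Real.rpow_natCast (c * x + 1) (3 * μ), ← Real.rpow_mul hxc1]
      have h5 : (c * x + 1) ^ ((((3 * μ : ℕ)):ℝ) * P) ≤ (Real.exp (c * x)) ^ ((((3 * μ : ℕ)):ℝ) * P) :=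
        Real.rpow_le_rpow hxc1 (Real.add_one_le_exp _) (by positivity)
      refine h5.trans_eq ?_
      rw [Real.rpow_def_of_pos (Real.exp_pos _), Real.log_exp, Real.rpow_def_of_pos hε0]
      congr 1
      calc c * x * ((((3 * μ : ℕ)):ℝ) * P) = (c * ((((3 * μ : ℕ)):ℝ) * P)) * x := by ring
      _ = (9/16) * x := by rw [hca]
      _ = Real.log ε * (-(9:ℝ)/16) := by rw [hxdef]; ring
    calc (K₁ + 1) ^ P ≤ 2 ^ P * ((c * x + 1) ^ (3 * μ)) ^ P := by rw [← h3]; exact h2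
    _ ≤ 2 ^ P * ε ^ (-(9:ℝ)/16) :=
        mul_le_mul_of_nonneg_left h4 (Real.rpow_nonneg (by norm_num) P)
  have hAineq : ε ^ ((9:ℝ)/16) * (K₁ + 1) ^ P ≤ 2 ^ P := by
    have h := mul_le_mul_of_nonneg_left hkey (Real.rpow_nonneg hε0.le ((9:ℝ)/16))
    have h2 : ε ^ ((9:ℝ)/16) * (2 ^ P * ε ^ (-(9:ℝ)/16)) = 2 ^ P := by
      rw [show ε ^ ((9:ℝ)/16) * (2 ^ P * ε ^ (-(9:ℝ)/16))
            = 2 ^ P * (ε ^ ((9:ℝ)/16) * ε ^ (-(9:ℝ)/16)) by ring,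
          ← Real.rpow_add hε0]
      norm_num
    rw [h2] at h
    exact h
  set E : ℝ := ε ^ ((1 + 3 * (m:ℝ)) / (2 * Ξ) + ((m:ℝ) - (a:ℝ)) / (4 * B * Ξ)) with hEdef
  have hEpos : 0 < E := by rw [hEdef]; exact Real.rpow_pos_of_pos hε0 _
  have hSpos : 0 < s ^ ((m:ℝ) - (a:ℝ)) := Real.rpow_pos_of_pos hs0 _
  have hApos : (0:ℝ) < (K₁ + 1) ^ P := Real.rpow_pos_of_pos hrpos _
  have hTpos : (0:ℝ) < (2:ℝ) ^ P := Real.rpow_pos_of_pos two_pos _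
  have hγma : γ₀ ^ ((m:ℝ) - (a:ℝ)) = ε ^ (((m:ℝ) - (a:ℝ)) / (4 * B * Ξ)) := by
    rw [hγ₀, ← Real.rpow_mul hε0.le]
    congr 1
    ring
  have hKcomb : ((K₁ + 1) ^ ((τ:ℝ) + 1)) ^ ((m:ℝ) - (a:ℝ)) = (K₁ + 1) ^ P := by
    rw [← Real.rpow_mul hrpos.le]
  have hr : r₀ ^ ((m:ℝ) - (a:ℝ))
      = s ^ ((m:ℝ) - (a:ℝ)) * ε ^ (((m:ℝ) - (a:ℝ)) / (4 * B * Ξ)) / (K₁ + 1) ^ P := by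
    rw [hr₀, Real.div_rpow (by positivity) (by positivity),
        Real.mul_rpow hs0.le γpos.le, hγma, hKcomb]
  have hεc : E = ε ^ (1 / (2 * Ξ)) * ε ^ (3 * (m:ℝ) / (2 * Ξ))
      * ε ^ (((m:ℝ) - (a:ℝ)) / (4 * B * Ξ)) := by
    rw [← Real.rpow_add hε0, ← Real.rpow_add hε0, hEdef]
    congr 1
    ring
  have hRHS : γ₀ ^ (2 * B) * r₀ ^ ((m:ℝ) - (a:ℝ)) * η₀ ^ ((m:ℝ))
      = E * s ^ ((m:ℝ) - (a:ℝ)) / (K₁ + 1) ^ P := by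
    rw [hγ2B, hηm, hr, hεc]
    ring
  have hstep1 : ε * N ≤ ε ^ ((9:ℝ)/16) * (s ^ ((m:ℝ) - (a:ℝ)) / 2 ^ P * E) := by
    have heq : ε * N = ε ^ ((9:ℝ)/16) * (ε ^ ((7:ℝ)/16) * N) := by
      rw [← mul_assoc, ← Real.rpow_add hε0,
          show (9:ℝ)/16 + 7/16 = 1 by norm_num, Real.rpow_one]
    rw [heq]
    exact mul_le_mul_of_nonneg_left hNsmall (Real.rpow_nonneg hε0.le _)
  have hstep2 : ε ^ ((9:ℝ)/16) * (s ^ ((m:ℝ) - (a:ℝ)) / 2 ^ P * E)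
      ≤ E * s ^ ((m:ℝ) - (a:ℝ)) / (K₁ + 1) ^ P := by
    rw [show ε ^ ((9:ℝ)/16) * (s ^ ((m:ℝ) - (a:ℝ)) / 2 ^ P * E)
          = ε ^ ((9:ℝ)/16) * s ^ ((m:ℝ) - (a:ℝ)) * E / 2 ^ P by ring,
        div_le_div_iff₀ hTpos hApos]
    have h := mul_le_mul_of_nonneg_right hAineq (mul_nonneg hSpos.le hEpos.le)
    calc ε ^ ((9:ℝ)/16) * s ^ ((m:ℝ) - (a:ℝ)) * E * (K₁ + 1) ^ P
        = ε ^ ((9:ℝ)/16) * (K₁ + 1) ^ P * (s ^ ((m:ℝ) - (a:ℝ)) * E) := by ring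
    _ ≤ 2 ^ P * (s ^ ((m:ℝ) - (a:ℝ)) * E) := h
    _ = E * s ^ ((m:ℝ) - (a:ℝ)) * 2 ^ P := by ring
  rw [hRHS]
  exact le_trans hstep1 hstep2
end

section
/- Let m, μ, n be positive integers with (1 + 1/(2m))^μ ≥ 2, and let ρ₀ ∈ (0,1). For η₀ ∈ (0,1) define η_ν = η₀^{(1+1/(2m))^ν}, ρ_ν = ρ₀/2^ν, and K_{ν+1} = (⌊log(η_ν^{−(m+1)})⌋ + 1)^{3μ} (natural logarithm) for ν = 0, 1, 2, …. Then there exists η* ∈ (0,1) such that for all η₀ ∈ (0, η*) and all integers ν ≥ 0: K_{ν+1}^{n} · e^{−K_{ν+1} ρ_ν} ≤ η_ν^{m+1}. -/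
/-- verification of the truncation-order condition (H1) of the Iteration Lemma:
with `η_ν = η₀^{(1+1/(2m))^ν}`, `ρ_ν = ρ₀/2^ν`, `K_{ν+1} = (⌊log(η_ν^{−(m+1)})⌋+1)^{3μ}`,
there is `η* ∈ (0,1)` such that for all `η₀ ∈ (0,η*)` and all `ν ≥ 0`,
`K_{ν+1}^n · e^{−K_{ν+1} ρ_ν} ≤ η_ν^{m+1}`. -/
theorem stmt_4 (m μ n : ℕ) (hm : 1 ≤ m) (hμ : 1 ≤ μ) (hn : 1 ≤ n)
    (h2 : (2 : ℝ) ≤ (1 + 1 / (2 * (m : ℝ))) ^ μ)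
    (ρ₀ : ℝ) (hρ₀ : ρ₀ ∈ Set.Ioo (0 : ℝ) 1) :
    ∃ ηstar ∈ Set.Ioo (0 : ℝ) 1, ∀ η₀ ∈ Set.Ioo (0 : ℝ) ηstar, ∀ ν : ℕ,
      ∀ ην ρν K : ℝ,
        ην = η₀ ^ ((1 + 1 / (2 * (m : ℝ))) ^ ν) →
        ρν = ρ₀ / 2 ^ ν →
        K = ((⌊Real.log (ην ^ (-((m : ℝ) + 1)))⌋ + 1 : ℤ) : ℝ) ^ (3 * μ) →
        K ^ n * Real.exp (-K * ρν) ≤ ην ^ (m + 1) := by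
  obtain ⟨hρ0, hρ1⟩ := hρ₀
  set C : ℝ := max 1 ((1 + 3 * μ * n) / ρ₀) with hCdef
  have hC1 : (1 : ℝ) ≤ C := le_max_left _ _
  have hC2 : (1 + 3 * μ * n : ℝ) / ρ₀ ≤ C := le_max_right _ _
  refine ⟨Real.exp (-C), ⟨Real.exp_pos _, ?_⟩, ?_⟩
  · have : (-C : ℝ) < 0 := by linarith
    calc Real.exp (-C) < Real.exp 0 := Real.exp_lt_exp.mpr this
      _ = 1 := Real.exp_zero
  rintro η₀ ⟨hη0, hηs⟩ ν ην ρν K hην hρν hK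
  set r : ℝ := 1 + 1 / (2 * (m : ℝ)) with hrdef
  have hm0 : (0 : ℝ) < m := by exact_mod_cast hm
  have hr1 : (1 : ℝ) ≤ r := by
    have : (0:ℝ) < 1 / (2 * (m:ℝ)) := by positivity
    rw [hrdef]; linarith
  have hrν1 : (1 : ℝ) ≤ r ^ ν := one_le_pow₀ hr1
  have hlog : Real.log η₀ < -C := by
    have h1 : Real.log η₀ < Real.log (Real.exp (-C)) := Real.log_lt_log hη0 hηs
    rwa [Real.log_exp] at h1
  set c : ℝ := ((m : ℝ) + 1) * (-Real.log η₀) with hcdef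
  have hCc : C ≤ c := by
    have h1 : C ≤ -Real.log η₀ := by linarith
    have h2' : -Real.log η₀ ≤ c := by
      rw [hcdef]; nlinarith [hm0]
    linarith
  have hc1 : (1 : ℝ) ≤ c := le_trans hC1 hCc
  set L : ℝ := c * r ^ ν with hLdef
  have hcL : c ≤ L := by nlinarith
  have hL1 : (1 : ℝ) ≤ L := le_trans hc1 hcL
  have hL0 : (0 : ℝ) < L := by linarith
  have hην0 : (0 : ℝ) < ην := by rw [hην]; exact Real.rpow_pos_of_pos hη0 _
  have hlogην : Real.log ην = r ^ ν * Real.log η₀ := by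
    rw [hην, Real.log_rpow hη0]
  have hfloorarg : Real.log (ην ^ (-((m : ℝ) + 1))) = L := by
    rw [Real.log_rpow hην0, hlogην, hLdef, hcdef]; ring
  rw [hfloorarg] at hK
  set M : ℝ := ((⌊L⌋ + 1 : ℤ) : ℝ) with hMdef
  have hLM : L ≤ M := by
    have := Int.lt_floor_add_one L
    rw [hMdef]; push_cast; linarith
  have hML : M ≤ L + 1 := by
    have := Int.floor_le L
    rw [hMdef]; push_cast; linarith
  have hM0 : (0 : ℝ) < M := lt_of_lt_of_le hL0 hLM
  have hKL : L ^ (3 * μ) ≤ K := by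
    rw [hK]; exact pow_le_pow_left₀ (le_of_lt hL0) hLM _
  have hK1 : (1 : ℝ) ≤ K := le_trans (one_le_pow₀ hL1) hKL
  have hK0 : (0 : ℝ) < K := lt_of_lt_of_le one_pos hK1
  -- key: L^(3μ) ≥ c * 2^ν * L
  have hLμ : (2 : ℝ) ^ ν ≤ L ^ μ := by
    have h1 : L ^ μ = c ^ μ * (r ^ μ) ^ ν := by
      rw [hLdef, mul_pow, ← pow_mul, mul_comm ν μ, pow_mul]
    have h2' : (2 : ℝ) ^ ν ≤ (r ^ μ) ^ ν := pow_le_pow_left₀ (by norm_num) h2 ν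
    have h3 : (1 : ℝ) ≤ c ^ μ := one_le_pow₀ hc1
    rw [h1]
    nlinarith [pow_pos (show (0:ℝ) < 2 by norm_num) ν]
  have hL2μ : c ≤ L ^ (2 * μ - 1) := by
    calc c = c ^ 1 := (pow_one c).symm
      _ ≤ c ^ (2 * μ - 1) := pow_le_pow_right₀ hc1 (by omega)
      _ ≤ L ^ (2 * μ - 1) := pow_le_pow_left₀ (by linarith) hcL _
  have hL3 : c * 2 ^ ν * L ≤ L ^ (3 * μ) := by
    have he : 3 * μ = (2 * μ - 1) + μ + 1 := by omega
    rw [he, pow_add, pow_add, pow_one]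
    have h2ν0 : (0 : ℝ) < (2:ℝ) ^ ν := by positivity
    have hA : c * 2 ^ ν ≤ L ^ (2 * μ - 1) * L ^ μ :=
      mul_le_mul hL2μ hLμ (le_of_lt h2ν0) (by positivity)
    calc c * 2 ^ ν * L ≤ (L ^ (2 * μ - 1) * L ^ μ) * L :=
          mul_le_mul_of_nonneg_right hA (le_of_lt hL0)
      _ = L ^ (2 * μ - 1) * L ^ μ * L := by ring
  have h2ν0 : (0 : ℝ) < (2 : ℝ) ^ ν := by positivity
  have hKρ : (1 + 3 * μ * n : ℝ) * L ≤ K * ρν := by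
    have hstep : c * ρ₀ * L ≤ K * ρν := by
      have h1 : c * ρ₀ * L = (c * 2 ^ ν * L) * ρ₀ / 2 ^ ν := by
        field_simp
      have h2' : (c * 2 ^ ν * L) * ρ₀ / 2 ^ ν ≤ L ^ (3 * μ) * ρ₀ / 2 ^ ν := by
        gcongr
      have h3 : L ^ (3 * μ) * ρ₀ / 2 ^ ν ≤ K * ρ₀ / 2 ^ ν := by
        gcongr
      rw [hρν]
      calc c * ρ₀ * L = (c * 2 ^ ν * L) * ρ₀ / 2 ^ ν := h1
        _ ≤ L ^ (3 * μ) * ρ₀ / 2 ^ ν := h2'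
        _ ≤ K * ρ₀ / 2 ^ ν := h3
        _ = K * (ρ₀ / 2 ^ ν) := by ring
    have hcρ : (1 + 3 * μ * n : ℝ) ≤ c * ρ₀ := by
      have : (1 + 3 * μ * n : ℝ) / ρ₀ ≤ c := le_trans hC2 hCc
      calc (1 + 3 * μ * n : ℝ) = ((1 + 3 * μ * n) / ρ₀) * ρ₀ := by field_simp
        _ ≤ c * ρ₀ := mul_le_mul_of_nonneg_right this (le_of_lt hρ0)
    have hfin := mul_le_mul_of_nonneg_right hcρ (le_of_lt hL0)
    linarith
  -- log M ≤ L
  have hlogM : Real.log M ≤ L := by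
    calc Real.log M ≤ M - 1 := Real.log_le_sub_one_of_pos hM0
      _ ≤ L := by linarith
  -- rewrite both sides as exponentials
  have hRHS : ην ^ (m + 1) = Real.exp (-L) := by
    have h1 : ην = Real.exp (Real.log ην) := (Real.exp_log hην0).symm
    have h2' : ((m : ℝ) + 1) * Real.log ην = -L := by
      rw [hlogην, hLdef, hcdef]; ring
    calc ην ^ (m + 1) = Real.exp (Real.log ην) ^ (m + 1) := by rw [← h1]
      _ = Real.exp (((m + 1 : ℕ) : ℝ) * Real.log ην) := (Real.exp_nat_mul _ _).symm
      _ = Real.exp (-L) := by rw [← h2']; push_cast; ring_nf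
  have hLHS : K ^ n * Real.exp (-K * ρν) = Real.exp ((n : ℝ) * Real.log K - K * ρν) := by
    rw [sub_eq_add_neg, Real.exp_add, Real.exp_nat_mul, Real.exp_log hK0, neg_mul]
  rw [hRHS, hLHS, Real.exp_le_exp]
  have hlogK : Real.log K = (3 * μ : ℝ) * Real.log M := by
    rw [hK, Real.log_pow]; push_cast; ring
  rw [hlogK]
  have hmul : (n : ℝ) * ((3 * μ : ℝ) * Real.log M) ≤ (3 * μ * n : ℝ) * L := by
    have hnn : (0 : ℝ) ≤ (3 * (μ:ℝ) * n) := by positivity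
    have h := mul_le_mul_of_nonneg_left hlogM hnn
    calc (n : ℝ) * ((3 * μ : ℝ) * Real.log M) = (3 * (μ:ℝ) * n) * Real.log M := by ring
      _ ≤ (3 * (μ:ℝ) * n) * L := h
      _ = (3 * μ * n : ℝ) * L := by ring
  linarith
end

section
/- With the notation of the context, there exists ε₀ ∈ (0,1) such that for every ε ∈ (0, ε₀) and every integer ν ≥ 0: η_ν < γ_ν^{2(2b)^{m+2}} and η_ν^{5/4} < γ_{ν+1}^{2(2b)^{m+2}}. -/
set_option maxHeartbeats 1000000 in
/-- with `η_ν = η₀^{(1+1/(2m))^ν}` and `γ_ν = γ₀(1/2 + 1/2^{ν+1})`, there is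
`ε₀ ∈ (0,1)` such that for every `ε ∈ (0,ε₀)` and every `ν ≥ 0`,
`η_ν < γ_ν^{2(2b)^{m+2}}` and `η_ν^{5/4} < γ_{ν+1}^{2(2b)^{m+2}}` (inequality (3.44),
used to verify the smallness condition (H5) of the KAM step). -/
theorem stmt_7
    (n b L m μ τ : ℕ)
    (hn : 1 ≤ n) (hb : 1 ≤ b) (hL : 2 ≤ L) (hμpos : 1 ≤ μ) (hτpos : 1 ≤ τ) (hmpos : 1 ≤ m)
    (hm : (L : ℝ) + Real.sqrt (4 * (L : ℝ) ^ 2 + 2 * (L : ℝ)) / 2 ≤ (m : ℝ))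
    (hτ : (n : ℝ) - 1 ≤ (τ : ℝ))
    (hμ : (2 : ℝ) ≤ (1 + 1 / (2 * (m : ℝ))) ^ μ)
    (a : ℕ) (ha : (a : ℤ) = ⌈((m : ℝ) + 1) / 3⌉)
    (Ξ : ℝ) (hΞ : Ξ = 8 * (μ : ℝ) * ((m : ℝ) + 1) * ((m : ℝ) - (a : ℝ)) * ((τ : ℝ) + 1)) :
    ∃ ε₀ ∈ Set.Ioo (0 : ℝ) 1, ∀ ε ∈ Set.Ioo (0 : ℝ) ε₀,
      ∀ γ₀ η₀ : ℝ,
        γ₀ = ε ^ (1 / (4 * (2 * (b : ℝ)) ^ (m + 2) * Ξ)) →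
        η₀ = γ₀ ^ (2 * (2 * (b : ℝ)) ^ (m + 2)) * ε ^ (1 / Ξ) →
        ∀ ν : ℕ,
          η₀ ^ ((1 + 1 / (2 * (m : ℝ))) ^ ν)
              < (γ₀ * (1 / 2 + 1 / 2 ^ (ν + 1))) ^ (2 * (2 * (b : ℝ)) ^ (m + 2)) ∧
          (η₀ ^ ((1 + 1 / (2 * (m : ℝ))) ^ ν)) ^ ((5 : ℝ) / 4)
              < (γ₀ * (1 / 2 + 1 / 2 ^ (ν + 2))) ^ (2 * (2 * (b : ℝ)) ^ (m + 2)) := by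
  have hL' : (2:ℝ) ≤ (L:ℝ) := by exact_mod_cast hL
  have hm2 : (2:ℝ) ≤ (m:ℝ) := by
    have h0 : (0:ℝ) ≤ Real.sqrt (4 * (L:ℝ) ^ 2 + 2 * (L:ℝ)) := Real.sqrt_nonneg _
    nlinarith
  have hμ1 : (1:ℝ) ≤ (μ:ℝ) := by exact_mod_cast hμpos
  have hτ1 : (1:ℝ) ≤ (τ:ℝ) := by exact_mod_cast hτpos
  have hb1 : (1:ℝ) ≤ (b:ℝ) := by exact_mod_cast hb
  have hma : (1:ℝ) ≤ (m:ℝ) - (a:ℝ) := by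
    have h1 : (a:ℤ) ≤ (m:ℤ) - 1 := by
      rw [ha, Int.ceil_le]; push_cast; nlinarith
    have h2 : (a:ℝ) ≤ (m:ℝ) - 1 := by exact_mod_cast h1
    linarith
  have hΞpos : (0:ℝ) < Ξ := by
    rw [hΞ]
    have h1 : (0:ℝ) < 8 * (μ:ℝ) := by linarith
    have h2 : (0:ℝ) < (m:ℝ) + 1 := by linarith
    have h3 : (0:ℝ) < (m:ℝ) - (a:ℝ) := by linarith
    have h4 : (0:ℝ) < (τ:ℝ) + 1 := by linarith
    exact mul_pos (mul_pos (mul_pos h1 h2) h3) h4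
  have hΞne : Ξ ≠ 0 := ne_of_gt hΞpos
  set A : ℝ := (2 * (b:ℝ)) ^ (m + 2) with hAdef
  have hApos : (0:ℝ) < A := by
    have : (0:ℝ) < 2 * (b:ℝ) := by linarith
    exact pow_pos this _
  have hAne : A ≠ 0 := ne_of_gt hApos
  refine ⟨(2:ℝ) ^ (-(2 * A * Ξ)), ⟨Real.rpow_pos_of_pos (by norm_num) _,
    Real.rpow_lt_one_of_one_lt_of_neg (by norm_num) (by nlinarith)⟩, ?_⟩
  rintro ε ⟨hεpos, hεlt⟩ γ₀ η₀ hγ hη ν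
  have hε1 : ε < 1 :=
    lt_trans hεlt (Real.rpow_lt_one_of_one_lt_of_neg (by norm_num) (by nlinarith))
  have hεle1 : ε ≤ 1 := le_of_lt hε1
  have hγpos : 0 < γ₀ := hγ ▸ Real.rpow_pos_of_pos hεpos _
  -- γ₀ ^ (2A) = ε ^ (1/(2Ξ))
  have hγB : γ₀ ^ (2 * A) = ε ^ (1 / (2 * Ξ)) := by
    rw [hγ, ← Real.rpow_mul hεpos.le]
    congr 1
    field_simp
    ring
  -- η₀ = ε ^ (3/(2Ξ))
  have hη' : η₀ = ε ^ (3 / (2 * Ξ)) := by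
    rw [hη, hγB, ← Real.rpow_add hεpos]
    congr 1
    field_simp
    ring
  set r : ℝ := (1 + 1 / (2 * (m:ℝ))) ^ ν with hrdef
  have hr1 : (1:ℝ) ≤ r := by
    apply one_le_pow₀
    have : (0:ℝ) < 2 * (m:ℝ) := by linarith
    have := one_div_pos.mpr this
    linarith
  -- key : ε ^ (1/Ξ) < (1/2) ^ (2A)
  have hkey : ε ^ (1 / Ξ) < ((1:ℝ)/2) ^ (2 * A) := by
    have h1 : ε ^ (1 / Ξ) < ((2:ℝ) ^ (-(2 * A * Ξ))) ^ (1 / Ξ) :=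
      Real.rpow_lt_rpow hεpos.le hεlt (by positivity)
    have h2 : ((2:ℝ) ^ (-(2 * A * Ξ))) ^ (1 / Ξ) = ((1:ℝ)/2) ^ (2 * A) := by
      rw [← Real.rpow_mul (by norm_num : (0:ℝ) ≤ 2)]
      rw [show -(2 * A * Ξ) * (1 / Ξ) = -(2 * A) by field_simp]
      rw [Real.rpow_neg (by norm_num : (0:ℝ) ≤ 2), ← Real.inv_rpow (by norm_num : (0:ℝ) ≤ 2)]
      norm_num
    rw [h2] at h1; exact h1
  have hεΞpos : (0:ℝ) < ε ^ (1 / (2 * Ξ)) := Real.rpow_pos_of_pos hεpos _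
  -- generic step
  have main : ∀ (k : ℕ) (s : ℝ), 3 / (2 * Ξ) ≤ s →
      ε ^ s < (γ₀ * (1 / 2 + 1 / 2 ^ k)) ^ (2 * A) := by
    intro k s hs
    have hc0 : (0:ℝ) < 1 / 2 ^ k := by positivity
    have hc : (1:ℝ)/2 ≤ 1 / 2 + 1 / 2 ^ k := by linarith
    have hcpos : (0:ℝ) < 1 / 2 + 1 / 2 ^ k := by linarith
    calc ε ^ s ≤ ε ^ (3 / (2 * Ξ)) :=
          Real.rpow_le_rpow_of_exponent_ge hεpos hεle1 hs
      _ = ε ^ (1 / (2 * Ξ)) * ε ^ (1 / Ξ) := by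
          rw [← Real.rpow_add hεpos]; congr 1; field_simp; ring
      _ < ε ^ (1 / (2 * Ξ)) * ((1:ℝ)/2) ^ (2 * A) := by
          exact mul_lt_mul_of_pos_left hkey hεΞpos
      _ ≤ ε ^ (1 / (2 * Ξ)) * (1 / 2 + 1 / 2 ^ k) ^ (2 * A) := by
          apply mul_le_mul_of_nonneg_left _ hεΞpos.le
          exact Real.rpow_le_rpow (by norm_num) hc (by positivity)
      _ = (γ₀ * (1 / 2 + 1 / 2 ^ k)) ^ (2 * A) := by
          rw [Real.mul_rpow hγpos.le hcpos.le, hγB]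
  constructor
  · have h1 : η₀ ^ r = ε ^ (3 / (2 * Ξ) * r) := by
      rw [hη', ← Real.rpow_mul hεpos.le]
    rw [h1]
    apply main (ν + 1)
    nlinarith [div_pos (by norm_num : (0:ℝ) < 3) (by linarith : (0:ℝ) < 2 * Ξ)]
  · have h1 : (η₀ ^ r) ^ ((5:ℝ)/4) = ε ^ (3 / (2 * Ξ) * r * (5 / 4)) := by
      rw [hη', ← Real.rpow_mul hεpos.le, ← Real.rpow_mul hεpos.le]
    rw [h1]
    apply main (ν + 2)
    nlinarith [div_pos (by norm_num : (0:ℝ) < 3) (by linarith : (0:ℝ) < 2 * Ξ)]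
end

section
/- Let b ≥ 1 and p, q > 1 be integers, and define g : ℝ^b × ℝ^b → ℝ by g(u, v) = (1/(2p)) Σ_{i=1}^{b} |uᵢ|^{2p} + (1/(2q)) Σ_{i=1}^{b} |vᵢ|^{2q}. Then there exist a real σ > 0 and an integer L ≥ 2 such that for all z, z* in the closed sup-norm unit ball of ℝ^{2b}: ‖∇g(z) − ∇g(z*)‖_∞ ≥ σ · ‖z − z*‖_∞^{L}, where ‖·‖_∞ is the supremum norm on ℝ^{2b} and ∇g is the gradient of g. -/
lemma key_nonneg (n : ℕ) (hn : n ≠ 0) (x y : ℝ) (hy : 0 ≤ y) (hxy : y ≤ x) :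
    ((x - y)/2)^n ≤ x^n - y^n := by
  have h0 : (0:ℝ) ≤ (x - y)/2 := by linarith
  have h1 : ((x-y)/2)^n ≤ (x-y)^n := pow_le_pow_left₀ h0 (by linarith) n
  have h2 : (x-y)^n + y^n ≤ ((x-y)+y)^n := pow_add_pow_le (by linarith) hy hn
  have hx : (x - y) + y = x := by ring
  rw [hx] at h2
  linarith

lemma key (n : ℕ) (hn : Odd n) (x y : ℝ) (hxy : y ≤ x) :
    ((x - y)/2)^n ≤ x^n - y^n := by
  have hn0 : n ≠ 0 := hn.pos.ne'
  rcases le_or_gt 0 y with hy | hy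
  · exact key_nonneg n hn0 x y hy hxy
  rcases le_or_gt 0 x with hx | hx
  · have hyn : y^n = -((-y)^n) := by rw [Odd.neg_pow hn]; ring
    have hmax : (x - y)/2 ≤ max x (-y) := by
      rcases le_total x (-y) with h|h
      · rw [max_eq_right h]; linarith
      · rw [max_eq_left h]; linarith
    have h0 : (0:ℝ) ≤ (x - y)/2 := by linarith
    have h1 : ((x-y)/2)^n ≤ (max x (-y))^n := pow_le_pow_left₀ h0 hmax n
    have h2 : (max x (-y))^n ≤ x^n + (-y)^n := by
      rcases le_total x (-y) with h|h
      · rw [max_eq_right h]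
        nlinarith [pow_nonneg hx n]
      · rw [max_eq_left h]
        nlinarith [pow_nonneg (by linarith : (0:ℝ) ≤ -y) n]
    linarith
  · have := key_nonneg n hn0 (-y) (-x) (by linarith) (by linarith)
    have e1 : (-y)^n = -(y^n) := Odd.neg_pow hn y
    have e2 : (-x)^n = -(x^n) := Odd.neg_pow hn x
    have e3 : (-y - -x) = x - y := by ring
    rw [e1, e2, e3] at this
    linarith

lemma key_abs (n : ℕ) (hn : Odd n) (x y : ℝ) : (|x - y|/2)^n ≤ |x^n - y^n| := by
  rcases le_total y x with h | h
  · have h1 := key n hn x y h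
    have h2 : (0:ℝ) ≤ ((x-y)/2)^n := pow_nonneg (by linarith) n
    rw [abs_of_nonneg (by linarith : (0:ℝ) ≤ x - y)]
    rw [abs_of_nonneg (by linarith : (0:ℝ) ≤ x^n - y^n)]
    exact h1
  · have h1 := key n hn y x h
    have h0 : (0:ℝ) ≤ ((y-x)/2)^n := pow_nonneg (by linarith) n
    have h2 : |x - y| = y - x := by rw [abs_sub_comm]; exact abs_of_nonneg (by linarith)
    have h3 : |x^n - y^n| = y^n - x^n := by
      rw [abs_sub_comm]; exact abs_of_nonneg (by linarith)
    rw [h2, h3]; exact h1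

lemma pi_norm_attained {b : ℕ} (hb : 1 ≤ b) (x : Fin b → ℝ) : ∃ i, ‖x‖ = |x i| := by
  haveI : Nonempty (Fin b) := ⟨⟨0, hb⟩⟩
  obtain ⟨i, -, hi⟩ := Finset.exists_mem_eq_sup Finset.univ Finset.univ_nonempty
    (fun i => ‖x i‖₊)
  exact ⟨i, by rw [Pi.norm_def, hi]; simp [Real.norm_eq_abs]⟩

/-- the weak convexity part of assumption (A0) holds for the model degenerate
normal term `g(u,v) = (1/(2p))Σ|uᵢ|^{2p} + (1/(2q))Σ|vᵢ|^{2q}`: there are `σ > 0` and an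
integer `L ≥ 2` with `‖∇g(z) − ∇g(z*)‖_∞ ≥ σ‖z − z*‖_∞^L` on the closed sup-norm unit ball.
Here the gradient `G` of `g` is characterized through the Fréchet derivative of `g` and the
standard inner product, and the norm on `(Fin b → ℝ) × (Fin b → ℝ)` is the sup norm. -/
theorem stmt_12 (b p q : ℕ) (hb : 1 ≤ b) (hp : 1 < p) (hq : 1 < q)
    (g : (Fin b → ℝ) × (Fin b → ℝ) → ℝ)
    (hg : ∀ z : (Fin b → ℝ) × (Fin b → ℝ),
      g z = (1 / (2 * (p : ℝ))) * ∑ i, |z.1 i| ^ (2 * p) +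
            (1 / (2 * (q : ℝ))) * ∑ i, |z.2 i| ^ (2 * q))
    (G : (Fin b → ℝ) × (Fin b → ℝ) → (Fin b → ℝ) × (Fin b → ℝ))
    (hdiff : ∀ z, DifferentiableAt ℝ g z)
    (hG : ∀ z w : (Fin b → ℝ) × (Fin b → ℝ),
      fderiv ℝ g z w = ∑ i, (G z).1 i * w.1 i + ∑ i, (G z).2 i * w.2 i) :
    ∃ σ : ℝ, 0 < σ ∧ ∃ L : ℕ, 2 ≤ L ∧
      ∀ z zs : (Fin b → ℝ) × (Fin b → ℝ), ‖z‖ ≤ 1 → ‖zs‖ ≤ 1 →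
        σ * ‖z - zs‖ ^ L ≤ ‖G z - G zs‖ := by
  -- Step 1: compute the gradient explicitly.
  have hGrad : ∀ z : (Fin b → ℝ) × (Fin b → ℝ), ∀ j,
      (G z).1 j = (z.1 j)^(2*p-1) ∧ (G z).2 j = (z.2 j)^(2*q-1) := by
    have hg' : g = fun z : (Fin b → ℝ) × (Fin b → ℝ) =>
        (1/(2*(p:ℝ))) * ∑ i, (z.1 i)^(2*p) + (1/(2*(q:ℝ))) * ∑ i, (z.2 i)^(2*q) := by
      funext z
      rw [hg]
      congr 2
      · exact Finset.sum_congr rfl fun i _ => (even_two_mul p).pow_abs _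
      · exact Finset.sum_congr rfl fun i _ => (even_two_mul q).pow_abs _
    intro z j
    have hd : HasFDerivAt g
        ((1/(2*(p:ℝ))) • (∑ i, ((2*p : ℝ) * (z.1 i)^(2*p-1)) •
          ((ContinuousLinearMap.proj i).comp
            (ContinuousLinearMap.fst ℝ (Fin b → ℝ) (Fin b → ℝ))))
        + (1/(2*(q:ℝ))) • (∑ i, ((2*q : ℝ) * (z.2 i)^(2*q-1)) •
          ((ContinuousLinearMap.proj i).comp
            (ContinuousLinearMap.snd ℝ (Fin b → ℝ) (Fin b → ℝ))))) z := by
      rw [hg']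
      have h1 : ∀ i : Fin b, HasFDerivAt (fun w : (Fin b → ℝ) × (Fin b → ℝ) => (w.1 i)^(2*p))
          (((2*p : ℝ) * (z.1 i)^(2*p-1)) •
            ((ContinuousLinearMap.proj i).comp
              (ContinuousLinearMap.fst ℝ (Fin b → ℝ) (Fin b → ℝ)))) z := by
        intro i
        have := HasDerivAt.comp_hasFDerivAt z (hasDerivAt_pow (2*p) (z.1 i))
          (((ContinuousLinearMap.proj i).comp
            (ContinuousLinearMap.fst ℝ (Fin b → ℝ) (Fin b → ℝ))).hasFDerivAt)
        simpa [Function.comp_def] using this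
      have h2 : ∀ i : Fin b, HasFDerivAt (fun w : (Fin b → ℝ) × (Fin b → ℝ) => (w.2 i)^(2*q))
          (((2*q : ℝ) * (z.2 i)^(2*q-1)) •
            ((ContinuousLinearMap.proj i).comp
              (ContinuousLinearMap.snd ℝ (Fin b → ℝ) (Fin b → ℝ)))) z := by
        intro i
        have := HasDerivAt.comp_hasFDerivAt z (hasDerivAt_pow (2*q) (z.2 i))
          (((ContinuousLinearMap.proj i).comp
            (ContinuousLinearMap.snd ℝ (Fin b → ℝ) (Fin b → ℝ))).hasFDerivAt)
        simpa [Function.comp_def] using this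
      have s1 := HasFDerivAt.fun_sum (fun i (_ : i ∈ Finset.univ) => h1 i)
      have s2 := HasFDerivAt.fun_sum (fun i (_ : i ∈ Finset.univ) => h2 i)
      exact (s1.const_mul (1/(2*(p:ℝ)))).add (s2.const_mul (1/(2*(q:ℝ))))
    have hp0 : (2*(p:ℝ)) ≠ 0 := by positivity
    have hq0 : (2*(q:ℝ)) ≠ 0 := by positivity
    constructor
    · have e1 := hG z (Pi.single j (1:ℝ), 0)
      rw [hd.fderiv] at e1
      simp only [ContinuousLinearMap.add_apply, ContinuousLinearMap.smul_apply,
        ContinuousLinearMap.coe_sum', Finset.sum_apply, ContinuousLinearMap.coe_smul',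
        Pi.smul_apply, ContinuousLinearMap.coe_comp', Function.comp_apply,
        ContinuousLinearMap.coe_fst', ContinuousLinearMap.coe_snd',
        ContinuousLinearMap.proj_apply, smul_eq_mul, Pi.single_apply, mul_ite, mul_one,
        mul_zero, Finset.sum_ite_eq', Finset.mem_univ, if_true, Pi.zero_apply,
        Finset.sum_const_zero, add_zero, zero_add] at e1
      rw [← e1]
      field_simp
    · have e1 := hG z (0, Pi.single j (1:ℝ))
      rw [hd.fderiv] at e1
      simp only [ContinuousLinearMap.add_apply, ContinuousLinearMap.smul_apply,
        ContinuousLinearMap.coe_sum', Finset.sum_apply, ContinuousLinearMap.coe_smul',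
        Pi.smul_apply, ContinuousLinearMap.coe_comp', Function.comp_apply,
        ContinuousLinearMap.coe_fst', ContinuousLinearMap.coe_snd',
        ContinuousLinearMap.proj_apply, smul_eq_mul, Pi.single_apply, mul_ite, mul_one,
        mul_zero, Finset.sum_ite_eq', Finset.mem_univ, if_true, Pi.zero_apply,
        Finset.sum_const_zero, add_zero, zero_add] at e1
      rw [← e1]
      field_simp
  -- Step 2: the quantitative estimate.
  set n1 := 2*p - 1 with hn1def
  set n2 := 2*q - 1 with hn2def
  have hodd1 : Odd n1 := ⟨p - 1, by omega⟩
  have hodd2 : Odd n2 := ⟨q - 1, by omega⟩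
  refine ⟨(1/2)^(max n1 n2), by positivity, max n1 n2, by omega, ?_⟩
  intro z zs hz hzs
  set L := max n1 n2 with hLdef
  have hd2 : ‖z - zs‖ ≤ 2 := (norm_sub_le z zs).trans (by linarith)
  have hd0 : (0:ℝ) ≤ ‖z - zs‖ := norm_nonneg _
  have hhalf : ‖z - zs‖ / 2 ≤ 1 := by linarith
  have hhalf0 : (0:ℝ) ≤ ‖z - zs‖ / 2 := by linarith
  have hsig : ((1:ℝ)/2)^L * ‖z - zs‖^L = (‖z - zs‖/2)^L := by
    rw [div_pow, div_pow, one_pow]; ring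
  rw [hsig]
  -- find a coordinate attaining the sup norm
  have hmax : ‖z - zs‖ = max ‖(z - zs).1‖ ‖(z - zs).2‖ := rfl
  rcases le_total ‖(z - zs).2‖ ‖(z - zs).1‖ with hcase | hcase
  · obtain ⟨i, hi⟩ := pi_norm_attained hb (z - zs).1
    have hni : ‖z - zs‖ = |z.1 i - zs.1 i| := by
      rw [hmax, max_eq_left hcase, hi]; rfl
    have hk := key_abs n1 hodd1 (z.1 i) (zs.1 i)
    have hcomp : |(z.1 i)^n1 - (zs.1 i)^n1| ≤ ‖G z - G zs‖ := by
      have h1 : (z.1 i)^n1 - (zs.1 i)^n1 = ((G z - G zs).1) i := by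
        have := (hGrad z i).1
        have := (hGrad zs i).1
        simp [Prod.fst_sub, Pi.sub_apply, (hGrad z i).1, (hGrad zs i).1]
      rw [h1]
      calc |((G z - G zs).1) i| ≤ ‖(G z - G zs).1‖ := by
            simpa [Real.norm_eq_abs] using norm_le_pi_norm ((G z - G zs).1) i
        _ ≤ ‖G z - G zs‖ := norm_fst_le _
    have hmono : (‖z - zs‖/2)^L ≤ (‖z - zs‖/2)^n1 :=
      pow_le_pow_of_le_one hhalf0 hhalf (le_max_left _ _)
    calc (‖z - zs‖/2)^L ≤ (‖z - zs‖/2)^n1 := hmono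
      _ = (|z.1 i - zs.1 i|/2)^n1 := by rw [hni]
      _ ≤ |(z.1 i)^n1 - (zs.1 i)^n1| := hk
      _ ≤ ‖G z - G zs‖ := hcomp
  · obtain ⟨i, hi⟩ := pi_norm_attained hb (z - zs).2
    have hni : ‖z - zs‖ = |z.2 i - zs.2 i| := by
      rw [hmax, max_eq_right hcase, hi]; rfl
    have hk := key_abs n2 hodd2 (z.2 i) (zs.2 i)
    have hcomp : |(z.2 i)^n2 - (zs.2 i)^n2| ≤ ‖G z - G zs‖ := by
      have h1 : (z.2 i)^n2 - (zs.2 i)^n2 = ((G z - G zs).2) i := by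
        simp [Prod.snd_sub, Pi.sub_apply, (hGrad z i).2, (hGrad zs i).2]
      rw [h1]
      calc |((G z - G zs).2) i| ≤ ‖(G z - G zs).2‖ := by
            simpa [Real.norm_eq_abs] using norm_le_pi_norm ((G z - G zs).2) i
        _ ≤ ‖G z - G zs‖ := norm_snd_le _
    have hmono : (‖z - zs‖/2)^L ≤ (‖z - zs‖/2)^n2 :=
      pow_le_pow_of_le_one hhalf0 hhalf (le_max_right _ _)
    calc (‖z - zs‖/2)^L ≤ (‖z - zs‖/2)^n2 := hmono
      _ = (|z.2 i - zs.2 i|/2)^n2 := by rw [hni]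
      _ ≤ |(z.2 i)^n2 - (zs.2 i)^n2| := hk
      _ ≤ ‖G z - G zs‖ := hcomp
end

section
/- Let n, m, τ be positive integers with m ≥ 1, and let ρ₀ ∈ (0,1]. Then there exists η* ∈ (0,1) such that for all η₀ ∈ (0, η*) and all integers ν ≥ 0: (2^ν/ρ₀) · ( Σ_{k ∈ ℤⁿ, k ≠ 0} |k|_∞^{4τ+2} · e^{−2|k|_∞ ρ₀/2^ν} )^{1/2} · η₀^{(1/4)(1+1/(2m))^ν} ≤ 1, where |k|_∞ = max_i |k_i|. -/
open Real

lemma aux_pow_le (p : ℕ) {c x : ℝ} (hc : 0 < c) (hx : 0 ≤ x) (hp : 1 ≤ p) :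
    x ^ p ≤ (p / c) ^ p * Real.exp (c * x) := by
  have hp0 : (0:ℝ) < p := by exact_mod_cast hp
  have h2 : c * x / p ≤ Real.exp (c * x / p) := by
    have := Real.add_one_le_exp (c * x / p); linarith
  have h1 : x ≤ p / c * Real.exp (c * x / p) := by
    calc x = (p / c) * (c * x / p) := by field_simp
    _ ≤ (p / c) * Real.exp (c * x / p) :=
      mul_le_mul_of_nonneg_left h2 (by positivity)
  calc x ^ p ≤ (p / c * Real.exp (c * x / p)) ^ p := pow_le_pow_left₀ hx h1 p
  _ = (p / c) ^ p * Real.exp (c * x / p) ^ p := mul_pow _ _ _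
  _ = (p / c) ^ p * Real.exp (c * x) := by
      rw [← Real.exp_nat_mul]; congr 1; field_simp

lemma pi_tsum_prod (h : ℤ → ENNReal) (N : ℕ) :
    ∑' k : Fin N → ℤ, ∏ i, h (k i) = (∑' j : ℤ, h j) ^ N := by
  induction N with
  | zero =>
    rw [tsum_eq_single (fun i => i.elim0) (fun b' hb' => absurd (Subsingleton.elim _ _) hb')]
    simp
  | succ N ih =>
    rw [← (Fin.consEquiv (fun _ : Fin (N+1) => ℤ)).tsum_eq, pow_succ, ← ih, mul_comm]
    have key : ∀ q : ℤ × (Fin N → ℤ), ∏ i, h ((Fin.consEquiv fun _ => ℤ) q i) =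
        h q.1 * ∏ i, h (q.2 i) := by
      rintro ⟨x, f⟩
      rw [Fin.prod_univ_succ]
      show h (Fin.cons (α := fun _ => ℤ) x f 0) *
          ∏ i : Fin N, h (Fin.cons (α := fun _ => ℤ) x f i.succ) = h x * ∏ i : Fin N, h (f i)
      rw [Fin.cons_zero]
      simp only [Fin.cons_succ]
    rw [tsum_congr key, ENNReal.tsum_prod']
    simp_rw [ENNReal.tsum_mul_left, ENNReal.tsum_mul_right]

set_option maxHeartbeats 1000000 in
lemma sum1d {c : ℝ} (hc0 : 0 < c) (hc1 : c ≤ 1) :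
    Summable (fun j : ℤ => Real.exp (-(c * ‖j‖))) ∧
      ∑' j : ℤ, Real.exp (-(c * ‖j‖)) ≤ 4 / c := by
  set r := Real.exp (-c) with hr
  have hr0 : 0 ≤ r := (Real.exp_pos _).le
  have hr1 : r < 1 := by
    rw [hr, ← Real.exp_zero]; exact Real.exp_lt_exp.mpr (by linarith)
  have hnat : (fun n : ℕ => Real.exp (-(c * ‖(n : ℤ)‖))) = fun n : ℕ => r ^ n := by
    funext j; rw [hr, ← Real.exp_nat_mul, Int.norm_natCast]; ring_nf
  have hneg : (fun n : ℕ => Real.exp (-(c * ‖(-(n+1) : ℤ)‖))) = fun n : ℕ => r ^ (n+1) := by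
    funext j
    rw [hr, ← Real.exp_nat_mul]
    congr 1
    have : ‖(-(j+1) : ℤ)‖ = (j : ℝ) + 1 := by
      rw [Int.norm_eq_abs]; push_cast; rw [abs_neg, abs_of_nonneg (by positivity)]
    rw [this]; push_cast; ring
  have hs1 : Summable (fun n : ℕ => Real.exp (-(c * ‖(n : ℤ)‖))) := by
    rw [hnat]; exact summable_geometric_of_lt_one hr0 hr1
  have hs2 : Summable (fun n : ℕ => Real.exp (-(c * ‖(-(n+1) : ℤ)‖))) := by
    rw [hneg]
    exact ((summable_geometric_of_lt_one hr0 hr1).mul_left r).congr (by intro i; ring)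
  refine ⟨Summable.of_nat_of_neg_add_one hs1 hs2, ?_⟩
  rw [tsum_of_nat_of_neg_add_one hs1 hs2, hnat, hneg]
  have hsum1 : ∑' n : ℕ, r ^ n = (1 - r)⁻¹ := tsum_geometric_of_lt_one hr0 hr1
  have hsum2 : ∑' n : ℕ, r ^ (n+1) = r * (1 - r)⁻¹ := by
    simp_rw [pow_succ, mul_comm (r ^ _) r]
    rw [tsum_mul_left, hsum1]
  have hrc : r ≤ 1 - c / 2 := by
    have h1 : 1 + c ≤ Real.exp c := by linarith [Real.add_one_le_exp c]
    have h2 : r = (Real.exp c)⁻¹ := by rw [hr, ← Real.exp_neg]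
    have h3 : r ≤ (1 + c)⁻¹ := by
      rw [h2]; exact inv_anti₀ (by linarith) h1
    have h4 : (1 + c)⁻¹ ≤ 1 - c / 2 := by
      rw [inv_le_iff_one_le_mul₀ (by linarith)]
      nlinarith
    linarith
  have h1r : c / 2 ≤ 1 - r := by linarith
  have hinv : (1 - r)⁻¹ ≤ 2 / c := by
    have := inv_anti₀ (by positivity : (0:ℝ) < c / 2) h1r
    calc (1 - r)⁻¹ ≤ (c / 2)⁻¹ := this
    _ = 2 / c := by field_simp
  rw [hsum1, hsum2]
  have : r * (1 - r)⁻¹ ≤ (1 - r)⁻¹ := by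
    nlinarith [inv_nonneg.mpr (by linarith : (0:ℝ) ≤ 1 - r)]
  calc (1-r)⁻¹ + r * (1-r)⁻¹ ≤ (1-r)⁻¹ + (1-r)⁻¹ := by linarith
  _ ≤ 2/c + 2/c := by linarith
  _ = 4 / c := by ring

lemma tsum_bound (n p : ℕ) (hn : 1 ≤ n) (hp : 1 ≤ p) {A : ℝ} (hA : 1 ≤ A) :
    ∑' k : {k : Fin n → ℤ // k ≠ 0},
        ‖(k : Fin n → ℤ)‖ ^ p * Real.exp (-((2 / A) * ‖(k : Fin n → ℤ)‖))
      ≤ ((p : ℝ) * A) ^ p * (4 * n * A) ^ n := by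
  have hA0 : 0 < A := by linarith
  have hn0 : (0:ℝ) < n := by exact_mod_cast hn
  set c : ℝ := 1 / ((n : ℝ) * A) with hc_def
  have hc0 : 0 < c := by positivity
  have hc1 : c ≤ 1 := by
    rw [hc_def, div_le_one (by positivity)]
    have hn1 : (1:ℝ) ≤ n := by exact_mod_cast hn
    nlinarith [mul_le_mul hn1 hA zero_le_one (by linarith : (0:ℝ) ≤ (n:ℝ))]
  set g : (Fin n → ℤ) → ℝ := fun k => ‖k‖ ^ p * Real.exp (-((2 / A) * ‖k‖)) with hg_def
  have hg0 : ∀ k, 0 ≤ g k := fun k => by positivity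
  set u : ℤ → ℝ := fun j => Real.exp (-(c * ‖j‖)) with hu_def
  obtain ⟨hu_sum, hu_le⟩ := sum1d hc0 hc1
  have pointwise : ∀ k : Fin n → ℤ, g k ≤ ((p:ℝ) * A) ^ p * ∏ i, u (k i) := by
    intro k
    have hk0 : (0:ℝ) ≤ ‖k‖ := norm_nonneg k
    have h1 : ‖k‖ ^ p ≤ ((p:ℝ) * A) ^ p * Real.exp (1 / A * ‖k‖) := by
      have := aux_pow_le p (c := 1 / A) (by positivity) hk0 hp
      rwa [show (p:ℝ) / (1 / A) = (p:ℝ) * A by field_simp] at this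
    have h2 : (∏ i, u (k i)) = Real.exp (-(c * ∑ i, ‖k i‖)) := by
      rw [← Real.exp_sum]
      congr 1
      rw [Finset.mul_sum, ← Finset.sum_neg_distrib]
    have h3 : ∑ i, ‖k i‖ ≤ (n : ℝ) * ‖k‖ := by
      calc ∑ i, ‖k i‖ ≤ ∑ _i : Fin n, ‖k‖ :=
            Finset.sum_le_sum fun i _ => norm_le_pi_norm k i
      _ = (n : ℝ) * ‖k‖ := by simp [Finset.sum_const, Finset.card_univ]
    have h4 : Real.exp (-(1 / A * ‖k‖)) ≤ Real.exp (-(c * ∑ i, ‖k i‖)) := by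
      apply Real.exp_le_exp.mpr
      have : c * ∑ i, ‖k i‖ ≤ c * ((n:ℝ) * ‖k‖) :=
        mul_le_mul_of_nonneg_left h3 hc0.le
      have he : c * ((n:ℝ) * ‖k‖) = 1 / A * ‖k‖ := by
        rw [hc_def]; field_simp
      linarith [this, he ▸ this]
    calc g k = ‖k‖ ^ p * Real.exp (-((2 / A) * ‖k‖)) := rfl
    _ ≤ (((p:ℝ) * A) ^ p * Real.exp (1 / A * ‖k‖)) * Real.exp (-((2 / A) * ‖k‖)) := by
        apply mul_le_mul_of_nonneg_right h1 (Real.exp_pos _).le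
    _ = ((p:ℝ) * A) ^ p * Real.exp (-(1 / A * ‖k‖)) := by
        rw [mul_assoc, ← Real.exp_add]; congr 2; field_simp; ring
    _ ≤ ((p:ℝ) * A) ^ p * Real.exp (-(c * ∑ i, ‖k i‖)) := by
        apply mul_le_mul_of_nonneg_left h4 (by positivity)
    _ = ((p:ℝ) * A) ^ p * ∏ i, u (k i) := by rw [h2]
  set B : ℝ := ((p:ℝ) * A) ^ p * (4 * n * A) ^ n with hB_def
  have hB0 : 0 ≤ B := by positivity
  have key : ∑' k : {k : Fin n → ℤ // k ≠ 0}, ENNReal.ofReal (g ↑k) ≤ ENNReal.ofReal B := by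
    calc ∑' k : {k : Fin n → ℤ // k ≠ 0}, ENNReal.ofReal (g ↑k)
        ≤ ∑' k : Fin n → ℤ, ENNReal.ofReal (g k) :=
          ENNReal.tsum_comp_le_tsum_of_injective Subtype.val_injective _
    _ ≤ ∑' k : Fin n → ℤ, ENNReal.ofReal (((p:ℝ) * A) ^ p * ∏ i, u (k i)) :=
          ENNReal.tsum_le_tsum fun k => ENNReal.ofReal_le_ofReal (pointwise k)
    _ = ENNReal.ofReal (((p:ℝ) * A) ^ p) *
          ∑' k : Fin n → ℤ, ∏ i, ENNReal.ofReal (u (k i)) := by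
        rw [← ENNReal.tsum_mul_left]
        apply tsum_congr
        intro k
        rw [ENNReal.ofReal_mul (by positivity),
          ENNReal.ofReal_prod_of_nonneg (fun i _ => (Real.exp_pos _).le)]
    _ = ENNReal.ofReal (((p:ℝ) * A) ^ p) *
          (∑' j : ℤ, ENNReal.ofReal (u j)) ^ n := by
        congr 1
        exact pi_tsum_prod (fun j => ENNReal.ofReal (u j)) n
    _ = ENNReal.ofReal (((p:ℝ) * A) ^ p) *
          (ENNReal.ofReal (∑' j : ℤ, u j)) ^ n := by
        rw [ENNReal.ofReal_tsum_of_nonneg (fun j => (Real.exp_pos _).le) hu_sum]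
    _ ≤ ENNReal.ofReal (((p:ℝ) * A) ^ p) * (ENNReal.ofReal (4 / c)) ^ n := by
        gcongr
    _ = ENNReal.ofReal B := by
        rw [← ENNReal.ofReal_pow (by positivity), ← ENNReal.ofReal_mul (by positivity)]
        congr 1
        rw [hB_def, hc_def, one_div, div_eq_mul_inv, inv_inv]
        ring
  by_cases hs : Summable fun k : {k : Fin n → ℤ // k ≠ 0} => g ↑k
  · have heq := ENNReal.ofReal_tsum_of_nonneg (fun k => hg0 _) hs
    rw [← heq] at key
    exact (ENNReal.ofReal_le_ofReal_iff hB0).mp key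
  · rw [tsum_eq_zero_of_not_summable hs]
    exact hB0

/-- the key smallness estimate (3.42) in the verification of (H3)–(H5):
there is `η* ∈ (0,1)` such that for all `η₀ ∈ (0,η*)` and all `ν ≥ 0`,
`(2^ν/ρ₀)·(Σ_{k ∈ ℤⁿ, k≠0} |k|_∞^{4τ+2} e^{−2|k|_∞ρ₀/2^ν})^{1/2}·η₀^{(1/4)(1+1/(2m))^ν} ≤ 1`.
Here `‖k‖` on `Fin n → ℤ` is the sup norm `max_i |k_i|`. -/
theorem stmt_15 (n m τ : ℕ) (hn : 1 ≤ n) (hm : 1 ≤ m) (hτ : 1 ≤ τ)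
    (ρ₀ : ℝ) (hρ₀ : ρ₀ ∈ Set.Ioc (0 : ℝ) 1) :
    ∃ ηstar ∈ Set.Ioo (0 : ℝ) 1, ∀ η₀ ∈ Set.Ioo (0 : ℝ) ηstar, ∀ ν : ℕ,
      2 ^ ν / ρ₀ *
          (∑' k : {k : Fin n → ℤ // k ≠ 0},
            ‖(k : Fin n → ℤ)‖ ^ (4 * τ + 2) *
              Real.exp (-2 * ‖(k : Fin n → ℤ)‖ * ρ₀ / 2 ^ ν)) ^ ((1 : ℝ) / 2) *
          η₀ ^ (1 / 4 * (1 + 1 / (2 * (m : ℝ))) ^ ν) ≤ 1 := by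
  obtain ⟨hρ0, hρ1⟩ := hρ₀
  have hm0 : (0:ℝ) < m := by exact_mod_cast hm
  set p := 4 * τ + 2 with hp_def
  have hp : 1 ≤ p := by omega
  set P := p + n with hP_def
  set Q := P + 1 with hQ_def
  set C : ℝ := max 1 ((p:ℝ) ^ p * (4 * n) ^ n) with hC_def
  have hC1 : (1:ℝ) ≤ C := le_max_left _ _
  have hC0 : (0:ℝ) < C := by linarith
  refine ⟨min (1/2) (min ((1/2^Q)^(8*m)) ((ρ₀^Q/C)^4)), ⟨?_, ?_⟩, ?_⟩
  · apply lt_min (by norm_num)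
    apply lt_min (by positivity) (by positivity)
  · exact lt_of_le_of_lt (min_le_left _ _) (by norm_num)
  intro η₀ hη₀ ν
  obtain ⟨hη0, hηlt⟩ := hη₀
  have hη1 : η₀ ≤ 1 :=
    le_trans hηlt.le (le_trans (min_le_left _ _) (by norm_num))
  have hηA : η₀ ≤ (1/2^Q)^(8*m) :=
    le_trans hηlt.le (le_trans (min_le_right _ _) (min_le_left _ _))
  have hηB : η₀ ≤ (ρ₀^Q/C)^4 :=
    le_trans hηlt.le (le_trans (min_le_right _ _) (min_le_right _ _))
  set A : ℝ := 2 ^ ν / ρ₀ with hA_def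
  have h2ν : (1:ℝ) ≤ 2 ^ ν := by
    calc (1:ℝ) = 1 ^ ν := (one_pow ν).symm
    _ ≤ 2 ^ ν := pow_le_pow_left₀ (by norm_num) (by norm_num) ν
  have hA1 : 1 ≤ A := by
    rw [hA_def, le_div_iff₀ hρ0, one_mul]; linarith
  have hA0 : 0 < A := by linarith
  have harg : ∀ x : ℝ, -2 * x * ρ₀ / 2 ^ ν = -((2 / A) * x) := by
    intro x; rw [hA_def]
    field_simp
  have hX : (∑' k : {k : Fin n → ℤ // k ≠ 0},
        ‖(k : Fin n → ℤ)‖ ^ p * Real.exp (-2 * ‖(k : Fin n → ℤ)‖ * ρ₀ / 2 ^ ν))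
      = ∑' k : {k : Fin n → ℤ // k ≠ 0},
        ‖(k : Fin n → ℤ)‖ ^ p * Real.exp (-((2 / A) * ‖(k : Fin n → ℤ)‖)) :=
    tsum_congr fun k => by rw [harg]
  have hCA : ((p:ℝ) * A) ^ p * (4 * n * A) ^ n ≤ C * A ^ P := by
    have he : ((p:ℝ) * A) ^ p * (4 * n * A) ^ n = ((p:ℝ) ^ p * (4 * n) ^ n) * A ^ P := by
      rw [hP_def, mul_pow, mul_pow, pow_add]; ring
    rw [he]
    exact mul_le_mul_of_nonneg_right (le_max_right _ _) (by positivity)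
  set X := ∑' k : {k : Fin n → ℤ // k ≠ 0},
      ‖(k : Fin n → ℤ)‖ ^ p * Real.exp (-2 * ‖(k : Fin n → ℤ)‖ * ρ₀ / 2 ^ ν) with hX_def
  have hX0 : 0 ≤ X := tsum_nonneg fun k => by positivity
  have hXle : X ≤ C * A ^ P := by
    rw [hX]
    exact le_trans (tsum_bound n p hn hp hA1) hCA
  have hAP1 : (1:ℝ) ≤ A ^ P := by
    calc (1:ℝ) = 1 ^ P := (one_pow P).symm
    _ ≤ A ^ P := pow_le_pow_left₀ (by norm_num) hA1 P
  have hY1 : (1:ℝ) ≤ C * A ^ P := by nlinarith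
  have hsqrt : X ^ ((1:ℝ)/2) ≤ C * A ^ P := by
    calc X ^ ((1:ℝ)/2) ≤ (C * A ^ P) ^ ((1:ℝ)/2) :=
          Real.rpow_le_rpow hX0 hXle (by norm_num)
    _ ≤ (C * A ^ P) ^ (1:ℝ) :=
          Real.rpow_le_rpow_of_exponent_le hY1 (by norm_num)
    _ = C * A ^ P := Real.rpow_one _
  have hexp_le : (1:ℝ)/4 + ν * (1/(8*m)) ≤ 1/4 * (1 + 1/(2*(m:ℝ))) ^ ν := by
    have hpos : (0:ℝ) ≤ 1/(2*(m:ℝ)) := by positivity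
    have hb := one_add_mul_le_pow (a := 1/(2*(m:ℝ))) (by linarith) ν
    have hx : (ν:ℝ) * (1/(8*m)) = ((ν:ℝ) * (1/(2*(m:ℝ)))) / 4 := by
      rw [mul_one_div, mul_one_div, div_div]
      congr 1
      ring
    rw [hx]
    linarith
  have hηE : η₀ ^ (1/4 * (1 + 1/(2*(m:ℝ))) ^ ν) ≤ η₀ ^ ((1:ℝ)/4 + ν * (1/(8*m))) :=
    Real.rpow_le_rpow_of_exponent_ge hη0 hη1 hexp_le
  have hsplit : η₀ ^ ((1:ℝ)/4 + ν * (1/(8*m)))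
      = η₀ ^ ((1:ℝ)/4) * (η₀ ^ ((1:ℝ)/(8*m))) ^ ν := by
    rw [Real.rpow_add hη0, mul_comm ((ν:ℕ):ℝ) _, Real.rpow_mul hη0.le, Real.rpow_natCast]
  have hfac1 : (2:ℝ)^Q * η₀ ^ ((1:ℝ)/(8*m)) ≤ 1 := by
    have hstep : η₀ ^ ((1:ℝ)/(8*m)) ≤ (1:ℝ)/2^Q := by
      have h1 : η₀ ^ ((1:ℝ)/(8*m)) ≤ ((1/2^Q : ℝ)^(8*m)) ^ ((1:ℝ)/(8*m)) :=
        Real.rpow_le_rpow hη0.le hηA (by positivity)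
      have h2 : ((1/2^Q : ℝ)^(8*m)) ^ ((1:ℝ)/(8*m)) = 1/2^Q := by
        rw [← Real.rpow_natCast ((1:ℝ)/2^Q) (8*m), ← Real.rpow_mul (by positivity),
          show ((8*m : ℕ):ℝ) * ((1:ℝ)/(8*m)) = 1 by push_cast; field_simp,
          Real.rpow_one]
      linarith
    calc (2:ℝ)^Q * η₀ ^ ((1:ℝ)/(8*m)) ≤ 2^Q * (1/2^Q) :=
          mul_le_mul_of_nonneg_left hstep (by positivity)
    _ = 1 := by field_simp
  have hfac2 : C * η₀ ^ ((1:ℝ)/4) / ρ₀^Q ≤ 1 := by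
    have hstep : η₀ ^ ((1:ℝ)/4) ≤ ρ₀^Q/C := by
      have h1 : η₀ ^ ((1:ℝ)/4) ≤ ((ρ₀^Q/C)^4) ^ ((1:ℝ)/4) :=
        Real.rpow_le_rpow hη0.le hηB (by norm_num)
      have h2 : ((ρ₀^Q/C)^(4:ℕ)) ^ ((1:ℝ)/4) = ρ₀^Q/C := by
        rw [← Real.rpow_natCast (ρ₀^Q/C) 4, ← Real.rpow_mul (by positivity)]
        norm_num
      linarith
    rw [div_le_one (by positivity)]
    calc C * η₀ ^ ((1:ℝ)/4) ≤ C * (ρ₀^Q/C) := mul_le_mul_of_nonneg_left hstep hC0.le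
    _ = ρ₀^Q := by field_simp
  have hrpow0 : (0:ℝ) ≤ η₀ ^ (1/4 * (1 + 1/(2*(m:ℝ))) ^ ν) := Real.rpow_nonneg hη0.le _
  calc A * X ^ ((1:ℝ)/2) * η₀ ^ (1/4 * (1 + 1/(2*(m:ℝ))) ^ ν)
      ≤ A * (C * A ^ P) * η₀ ^ (1/4 * (1 + 1/(2*(m:ℝ))) ^ ν) :=
        mul_le_mul_of_nonneg_right (mul_le_mul_of_nonneg_left hsqrt hA0.le) hrpow0
  _ ≤ A * (C * A ^ P) * (η₀ ^ ((1:ℝ)/4) * (η₀ ^ ((1:ℝ)/(8*m))) ^ ν) := by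
        rw [← hsplit]
        exact mul_le_mul_of_nonneg_left hηE (by positivity)
  _ = (C * η₀ ^ ((1:ℝ)/4) / ρ₀^Q) * ((2:ℝ)^Q * η₀ ^ ((1:ℝ)/(8*m))) ^ ν := by
        have hmp : ((2:ℝ)^Q * η₀ ^ ((1:ℝ)/(8*m))) ^ ν
            = ((2:ℝ)^ν)^Q * (η₀ ^ ((1:ℝ)/(8*m)))^ν := by
          rw [mul_pow, ← pow_mul, ← pow_mul, Nat.mul_comm]
        rw [hmp, hA_def, hQ_def]
        have h2 : (2:ℝ)^ν ≠ 0 := by positivity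
        generalize (2:ℝ)^ν = w at *
        field_simp
        ring_nf
        rw [mul_assoc (w * w ^ P * ρ₀), ← mul_pow, mul_inv_cancel₀ hρ0.ne', one_pow, mul_one]
  _ ≤ 1 * 1 := by
        apply mul_le_mul hfac2 _ (by positivity) (by norm_num)
        exact pow_le_one₀ (by positivity) hfac1
  _ = 1 := by norm_num
end
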